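/- arXiv:2005.01818 — 6 statements merged into one kernel-verified Lean document; each statement's English description precedes it below -/
import Mathlib

section
/- For every real number s ≥ 1, the minimum over x₁, x₂ ∈ ℝ of (1 − x₁)² + x₂² + (x₁/s − x₂·s)² equals 1/(1 + s⁴ + s²). -/
/-- For `s ≥ 1`, the minimum over `x₁ x₂ ∈ ℝ` of
`(1 − x₁)² + x₂² + (x₁/s − x₂·s)²` equals `1/(1 + s⁴ + s²)`. -/
theorem min_quadratic_two_vars (s : ℝ) (hs : 1 ≤ s) :
    IsLeast (Set.range fun p : ℝ × ℝ =>
        (1 - p.1) ^ 2 + p.2 ^ 2 + (p.1 / s - p.2 * s) ^ 2)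
      (1 / (1 + s ^ 4 + s ^ 2)) := by
  have hs0 : (0:ℝ) < s := lt_of_lt_of_le one_pos hs
  have hD : (0:ℝ) < 1 + s ^ 4 + s ^ 2 := by positivity
  constructor
  · refine ⟨((s^2 + s^4)/(1 + s^4 + s^2), s^2/(1 + s^4 + s^2)), ?_⟩
    field_simp
    ring
  · rintro y ⟨⟨a, b⟩, rfl⟩
    simp only
    have hrw : a / s - b * s = (a - b * s^2) / s := by field_simp
    rw [hrw, div_pow, div_le_iff₀ hD, ← sub_nonneg]
    have hkey : ((1 - a) ^ 2 + b ^ 2 + (a - b * s ^ 2) ^ 2 / s ^ 2) * (1 + s ^ 4 + s ^ 2) - 1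
        = (((1-a)*s*s - (a - b*s^2))^2 + ((1-a)*s*s^2 - b*s)^2
            + ((a - b*s^2)*s^2 - b*s*s)^2) / s^2 := by
      field_simp
      ring
    rw [hkey]
    positivity
end

section
/- Let H be the reduced weighted Laplacian of a connected graph G with positive edge weights, U an independent set of internal nodes, and S the Schur complement (Kron reduction) of H eliminating U. If i, j ∈ U_c satisfy (ij) ∈ E and have no common neighbor in U, then the diagonal entries of S satisfy S(i,i) ≥ β_{ij} and S(j,j) ≥ β_{ij}. -/
open Finset

/-- The weighted Laplacian of a graph `G` on `Fin n` with edge weights `β`. -/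
noncomputable def weightedLaplacian {n : ℕ} (G : SimpleGraph (Fin n)) [DecidableRel G.Adj]
    (β : Fin n → Fin n → ℝ) : Matrix (Fin n) (Fin n) ℝ :=
  fun i j =>
    if i = j then ∑ k ∈ univ.filter (G.Adj i ·), β i k
    else if G.Adj i j then -β i j else 0

/-- The reduced weighted Laplacian: remove the row and column of the reference node `r`. -/
noncomputable def reducedLaplacian {n : ℕ} (G : SimpleGraph (Fin n)) [DecidableRel G.Adj]
    (β : Fin n → Fin n → ℝ) (r : Fin n) :
    Matrix {v : Fin n // v ≠ r} {v : Fin n // v ≠ r} ℝ :=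
  (weightedLaplacian G β).submatrix (·.1) (·.1)

/-- The Schur complement (Kron reduction) of the reduced Laplacian, eliminating the node
set `U`:  `S = H^{U_c U_c} − H^{U_c U} (H^{UU})⁻¹ H^{U U_c}`. -/
noncomputable def kronReduction {n : ℕ} (G : SimpleGraph (Fin n)) [DecidableRel G.Adj]
    (β : Fin n → Fin n → ℝ) (r : Fin n) (U : Finset {v : Fin n // v ≠ r}) :
    Matrix {v : {v : Fin n // v ≠ r} // v ∉ U} {v : {v : Fin n // v ≠ r} // v ∉ U} ℝ :=
  (Matrix.of fun i j : {v : {v : Fin n // v ≠ r} // v ∉ U} =>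
      reducedLaplacian G β r i.1 j.1) -
    (Matrix.of fun (i : {v : {v : Fin n // v ≠ r} // v ∉ U})
        (u : {v : {v : Fin n // v ≠ r} // v ∈ U}) => reducedLaplacian G β r i.1 u.1) *
      (Matrix.of fun u w : {v : {v : Fin n // v ≠ r} // v ∈ U} =>
        reducedLaplacian G β r u.1 w.1)⁻¹ *
      (Matrix.of fun (u : {v : {v : Fin n // v ≠ r} // v ∈ U})
        (j : {v : {v : Fin n // v ≠ r} // v ∉ U}) => reducedLaplacian G β r u.1 j.1)

/- Since `U` is independent, the block `H^{UU}` is the diagonal matrix of weighted degrees `d_u`,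
so `S(i,i) = d_i - ∑_{u ∈ U, u ~ i} β_{iu} β_{ui} / d_u`. Each subtracted term is at most `β_{iu}`
because `β_{ui} ≤ d_u`, and the neighbours of `i` in `U` together with `j ∉ U` contribute at most
`d_i` to the weighted degree of `i`. -/

namespace Matrix

variable {ι κ ν K : Type*} [Fintype κ] [DecidableEq κ] [Field K]

theorem inv_diagonal_of_ne_zero {d : κ → K} (hd : ∀ k, d k ≠ 0) :
    (diagonal d)⁻¹ = diagonal d⁻¹ :=
  inv_eq_left_inv <| by
    rw [diagonal_mul_diagonal, ← diagonal_one]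
    exact congrArg diagonal (funext fun k => inv_mul_cancel₀ (hd k))

theorem mul_inv_diagonal_mul_apply (B : Matrix ι κ K) (C : Matrix κ ν K) {d : κ → K}
    (hd : ∀ k, d k ≠ 0) (i : ι) (l : ν) :
    (B * (diagonal d)⁻¹ * C) i l = ∑ k, B i k * C k l / d k := by
  rw [inv_diagonal_of_ne_zero hd, mul_apply]
  refine Finset.sum_congr rfl fun k _ => ?_
  rw [mul_diagonal, Pi.inv_apply, div_eq_mul_inv, mul_right_comm]

end Matrix

section WeightedLaplacian

variable {m : ℕ} (G : SimpleGraph (Fin m)) [DecidableRel G.Adj] (β : Fin m → Fin m → ℝ)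

noncomputable def weightedDegree (v : Fin m) : ℝ :=
  ∑ k ∈ univ.filter (G.Adj v ·), β v k

variable {G β}

theorem weightedLaplacian_apply_self (v : Fin m) :
    weightedLaplacian G β v v = weightedDegree G β v :=
  if_pos rfl

theorem weightedLaplacian_apply_of_ne {v w : Fin m} (h : v ≠ w) :
    weightedLaplacian G β v w = if G.Adj v w then -β v w else 0 :=
  if_neg h

theorem sum_ite_adj_le_weightedDegree (hpos : ∀ v w, G.Adj v w → 0 < β v w) (v : Fin m)
    (s : Finset (Fin m)) :
    ∑ k ∈ s, (if G.Adj v k then β v k else 0) ≤ weightedDegree G β v := by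
  rw [weightedDegree, sum_filter]
  exact sum_le_univ_sum_of_nonneg fun k => by
    split_ifs with h
    exacts [(hpos v k h).le, le_rfl]

theorem le_weightedDegree_of_adj (hpos : ∀ v w, G.Adj v w → 0 < β v w) {v w : Fin m}
    (h : G.Adj v w) : β v w ≤ weightedDegree G β v := by
  simpa [h] using sum_ite_adj_le_weightedDegree hpos v {w}

theorem weightedDegree_pos_of_adj (hpos : ∀ v w, G.Adj v w → 0 < β v w) {v w : Fin m}
    (h : G.Adj v w) : 0 < weightedDegree G β v :=
  (hpos v w h).trans_le (le_weightedDegree_of_adj hpos h)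

theorem weightedLaplacian_mul_div_le (hpos : ∀ v w, G.Adj v w → 0 < β v w) {v w : Fin m}
    (h : v ≠ w) :
    weightedLaplacian G β v w * weightedLaplacian G β w v / weightedDegree G β w ≤
      if G.Adj v w then β v w else 0 := by
  rw [weightedLaplacian_apply_of_ne h, weightedLaplacian_apply_of_ne h.symm]
  by_cases hvw : G.Adj v w
  · have hwv := hvw.symm
    have hdeg := weightedDegree_pos_of_adj hpos hwv
    rw [if_pos hvw, if_pos hwv, if_pos hvw, neg_mul_neg, mul_div_assoc]
    exact mul_le_of_le_one_right (hpos v w hvw).le <|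
      (div_le_one hdeg).2 (le_weightedDegree_of_adj hpos hwv)
  · simp [hvw]

theorem weightedLaplacian_submatrix_eq_diagonal {ι : Type*} [Fintype ι] [DecidableEq ι]
    {f : ι → Fin m} (hf : Function.Injective f) (hind : ∀ a b, ¬ G.Adj (f a) (f b)) :
    (weightedLaplacian G β).submatrix f f = Matrix.diagonal (weightedDegree G β ∘ f) := by
  ext a b
  rcases eq_or_ne a b with rfl | hab
  · simp [weightedLaplacian_apply_self]
  · simp [weightedLaplacian_apply_of_ne (hf.ne hab), hind, hab]

end WeightedLaplacian

theorem kronReduction_apply_self {m : ℕ} {G : SimpleGraph (Fin m)} [DecidableRel G.Adj]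
    {β : Fin m → Fin m → ℝ} {r : Fin m} {U : Finset {v : Fin m // v ≠ r}}
    (hind : ∀ u ∈ U, ∀ w ∈ U, ¬ G.Adj u.1 w.1)
    (hdeg : ∀ u ∈ U, weightedDegree G β u.1 ≠ 0) (i : {v : {v : Fin m // v ≠ r} // v ∉ U}) :
    kronReduction G β r U i i = weightedDegree G β i.1.1 -
      ∑ u : {v : {v : Fin m // v ≠ r} // v ∈ U},
        weightedLaplacian G β i.1.1 u.1.1 * weightedLaplacian G β u.1.1 i.1.1 /
          weightedDegree G β u.1.1 := by
  have hblock : (Matrix.of fun u w : {v : {v : Fin m // v ≠ r} // v ∈ U} =>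
      reducedLaplacian G β r u.1 w.1) = Matrix.diagonal fun u => weightedDegree G β u.1.1 :=
    weightedLaplacian_submatrix_eq_diagonal (fun u w h => Subtype.ext (Subtype.ext h))
      fun u w => hind u.1 u.2 w.1 w.2
  rw [kronReduction, Matrix.sub_apply, hblock, Matrix.mul_inv_diagonal_mul_apply _ _
    (d := fun u : {v : {v : Fin m // v ≠ r} // v ∈ U} => weightedDegree G β u.1.1)
    fun u => hdeg u.1 u.2]
  simp only [Matrix.of_apply, reducedLaplacian, Matrix.submatrix_apply,
    weightedLaplacian_apply_self]

theorem le_kronReduction_apply_self {m : ℕ} {G : SimpleGraph (Fin m)} [DecidableRel G.Adj]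
    {β : Fin m → Fin m → ℝ} (hpos : ∀ v w, G.Adj v w → 0 < β v w) {r : Fin m}
    {U : Finset {v : Fin m // v ≠ r}} (hind : ∀ u ∈ U, ∀ w ∈ U, ¬ G.Adj u.1 w.1)
    (hdeg : ∀ u ∈ U, 0 < G.degree u.1) {i j : {v : {v : Fin m // v ≠ r} // v ∉ U}}
    (hadj : G.Adj i.1.1 j.1.1) :
    β i.1.1 j.1.1 ≤ kronReduction G β r U i i := by
  have hdeg_ne : ∀ u ∈ U, weightedDegree G β u.1 ≠ 0 := fun u hu =>
    have ⟨_, hw⟩ := (G.degree_pos_iff_exists_adj _).1 (hdeg u hu)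
    (weightedDegree_pos_of_adj hpos hw).ne'
  let f k := if G.Adj i.1.1 k then β i.1.1 k else 0
  have hterm (u : {v : {v : Fin m // v ≠ r} // v ∈ U}) :
      weightedLaplacian G β i.1.1 u.1.1 * weightedLaplacian G β u.1.1 i.1.1 /
        weightedDegree G β u.1.1 ≤ f u.1.1 :=
    weightedLaplacian_mul_div_le hpos fun h => i.2 (Subtype.ext h ▸ u.2)
  have hsum : ∑ u : {v : {v : Fin m // v ≠ r} // v ∈ U}, f u.1.1 + β i.1.1 j.1.1 ≤
      weightedDegree G β i.1.1 := by
    have hj : j.1.1 ∉ U.map (Function.Embedding.subtype _) := by simpa using fun _ => j.2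
    have := sum_ite_adj_le_weightedDegree hpos i.1.1 (insert j.1.1 (U.map (.subtype _)))
    rwa [sum_insert hj, if_pos hadj, sum_map, ← sum_coe_sort U, add_comm] at this
  rw [kronReduction_apply_self hind hdeg_ne]
  linarith [sum_le_sum fun u (_ : u ∈ univ) => hterm u]

theorem kronReduction_diag_ge_edge_weight_general
    {n : ℕ} (G : SimpleGraph (Fin (n + 1))) [DecidableRel G.Adj]
    (β : Fin (n + 1) → Fin (n + 1) → ℝ)
    (hsym : ∀ i j, β i j = β j i)
    (hpos : ∀ i j, G.Adj i j → 0 < β i j)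
    (r : Fin (n + 1))
    (U : Finset {v : Fin (n + 1) // v ≠ r})
    (hind : ∀ u ∈ U, ∀ w ∈ U, ¬ G.Adj u.1 w.1)
    (hdeg : ∀ u ∈ U, 2 ≤ G.degree u.1)
    (i j : {v : {v : Fin (n + 1) // v ≠ r} // v ∉ U})
    (hadj : G.Adj i.1.1 j.1.1) :
    β i.1.1 j.1.1 ≤ kronReduction G β r U i i ∧
      β i.1.1 j.1.1 ≤ kronReduction G β r U j j := by
  have hdeg_pos : ∀ u ∈ U, 0 < G.degree u.1 := fun u hu => two_pos.trans_le (hdeg u hu)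
  refine ⟨le_kronReduction_apply_self hpos hind hdeg_pos hadj, ?_⟩
  rw [hsym]
  exact le_kronReduction_apply_self hpos hind hdeg_pos hadj.symm

/-- if `i, j ∈ U_c` satisfy `(ij) ∈ E` and have no common neighbor in `U`, then
the diagonal entries of the Kron reduction satisfy `S(i,i) ≥ β_{ij}` and `S(j,j) ≥ β_{ij}`. -/
theorem kronReduction_diag_ge_edge_weight
    {n : ℕ} (G : SimpleGraph (Fin (n + 1))) [DecidableRel G.Adj]
    (β : Fin (n + 1) → Fin (n + 1) → ℝ)
    (hsym : ∀ i j, β i j = β j i)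
    (hpos : ∀ i j, G.Adj i j → 0 < β i j)
    (hconn : G.Connected)
    (r : Fin (n + 1))
    (U : Finset {v : Fin (n + 1) // v ≠ r})
    (hind : ∀ u ∈ U, ∀ w ∈ U, ¬ G.Adj u.1 w.1)
    (hdeg : ∀ u ∈ U, 2 ≤ G.degree u.1)
    (i j : {v : {v : Fin (n + 1) // v ≠ r} // v ∉ U})
    (hadj : G.Adj i.1.1 j.1.1)
    (hnc : ¬ ∃ u ∈ U, G.Adj i.1.1 u.1 ∧ G.Adj j.1.1 u.1) :
    β i.1.1 j.1.1 ≤ kronReduction G β r U i i ∧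
      β i.1.1 j.1.1 ≤ kronReduction G β r U j j :=
  kronReduction_diag_ge_edge_weight_general G β hsym hpos r U hind hdeg i j hadj
end

section
/- Let H be the reduced weighted Laplacian of graph G (row/column of a reference node removed), Σ_p a diagonal positive definite matrix, and Σ_θ⁻¹ = H Σ_p⁻¹ H. If nodes i, j are not part of any 3-node loop of G, then (ij) ∈ E implies Σ_θ⁻¹(i,j) < 0, (ij) ∉ E with a common neighbor k implies Σ_θ⁻¹(i,j) > 0, and (ij) ∉ E with no common neighbor implies Σ_θ⁻¹(i,j) = 0. -/
open Finset

/-- with `Σθ⁻¹ = H Σp⁻¹ H` for the reduced weighted Laplacian `H` and diagonal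
positive definite `Σp`, for nodes `i ≠ j` not part of any 3-node loop: `(ij) ∈ E` implies
`Σθ⁻¹(i,j) < 0`; `(ij) ∉ E` with a common neighbor implies `Σθ⁻¹(i,j) > 0`; `(ij) ∉ E` with
no common neighbor implies `Σθ⁻¹(i,j) = 0`. -/
theorem inverse_covariance_signs
    {n : ℕ} (G : SimpleGraph (Fin (n + 1))) [DecidableRel G.Adj]
    (β : Fin (n + 1) → Fin (n + 1) → ℝ)
    (hsym : ∀ i j, β i j = β j i)
    (hpos : ∀ i j, G.Adj i j → 0 < β i j)
    (hconn : G.Connected)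
    (r : Fin (n + 1))
    (d : {v : Fin (n + 1) // v ≠ r} → ℝ) (hd : ∀ v, 0 < d v)
    (i j : {v : Fin (n + 1) // v ≠ r}) (hij : i ≠ j)
    (htri : ¬ (G.Adj i.1 j.1 ∧
      ∃ k : {v : Fin (n + 1) // v ≠ r}, G.Adj i.1 k.1 ∧ G.Adj j.1 k.1)) :
    (G.Adj i.1 j.1 →
        (reducedLaplacian G β r * (Matrix.diagonal d)⁻¹ * reducedLaplacian G β r) i j < 0) ∧
      ((¬ G.Adj i.1 j.1 ∧
          ∃ k : {v : Fin (n + 1) // v ≠ r}, G.Adj i.1 k.1 ∧ G.Adj j.1 k.1) →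
        0 < (reducedLaplacian G β r * (Matrix.diagonal d)⁻¹ * reducedLaplacian G β r) i j) ∧
      ((¬ G.Adj i.1 j.1 ∧
          ¬ ∃ k : {v : Fin (n + 1) // v ≠ r}, G.Adj i.1 k.1 ∧ G.Adj j.1 k.1) →
        (reducedLaplacian G β r * (Matrix.diagonal d)⁻¹ * reducedLaplacian G β r) i j = 0) := by
  
  classical
  set H := reducedLaplacian G β r with hH
  set f : {v : Fin (n + 1) // v ≠ r} → ℝ := fun k => H i k * (d k)⁻¹ * H k j with hf
  have hdiaginv : (Matrix.diagonal d)⁻¹ = Matrix.diagonal (fun v => (d v)⁻¹) := by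
    apply Matrix.inv_eq_right_inv
    rw [Matrix.diagonal_mul_diagonal]
    have : (fun v => d v * (d v)⁻¹) = fun _ : {v : Fin (n + 1) // v ≠ r} => (1 : ℝ) := by
      funext v; exact mul_inv_cancel₀ (hd v).ne'
    rw [this, Matrix.diagonal_one]
  have hentry : (H * (Matrix.diagonal d)⁻¹ * H) i j = ∑ k, f k := by
    rw [hdiaginv, Matrix.mul_apply]
    simp [Matrix.mul_diagonal, hf, Ring.inverse_eq_inv']
  have hoff : ∀ a b : {v : Fin (n + 1) // v ≠ r}, a ≠ b →
      H a b = if G.Adj a.1 b.1 then -β a.1 b.1 else 0 := by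
    intro a b hab
    have h1 : a.1 ≠ b.1 := fun h => hab (Subtype.ext h)
    simp [hH, reducedLaplacian, weightedLaplacian, h1]
  have hnb : ∀ a : {v : Fin (n + 1) // v ≠ r}, ∃ b, G.Adj a.1 b := by
    intro a
    have haux : ∀ (u v : Fin (n + 1)), u ≠ v → G.Walk u v → ∃ b, G.Adj u b := by
      intro u v huv w
      cases w with
      | nil => exact absurd rfl huv
      | cons h _ => exact ⟨_, h⟩
    obtain ⟨w⟩ := hconn.preconnected a.1 r
    exact haux _ _ a.2 w
  have hdiagpos : ∀ a : {v : Fin (n + 1) // v ≠ r}, 0 < H a a := by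
    intro a
    have he : H a a = ∑ k ∈ univ.filter (G.Adj a.1 ·), β a.1 k := by
      simp [hH, reducedLaplacian, weightedLaplacian]
    rw [he]
    obtain ⟨b, hb⟩ := hnb a
    apply Finset.sum_pos
    · intro k hk
      exact hpos _ _ (by simpa using (Finset.mem_filter.mp hk).2)
    · exact ⟨b, by simp [hb]⟩
  have hjmem : j ∈ univ.erase i := Finset.mem_erase.mpr ⟨hij.symm, Finset.mem_univ j⟩
  have hsplit : ∑ k, f k = f i + (f j + ∑ k ∈ (univ.erase i).erase j, f k) := by
    rw [Finset.add_sum_erase _ f hjmem, Finset.add_sum_erase _ f (Finset.mem_univ i)]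
  refine ⟨?_, ?_, ?_⟩
  · -- adjacent case
    intro hadj
    have hnoc : ¬∃ k : {v : Fin (n + 1) // v ≠ r}, G.Adj i.1 k.1 ∧ G.Adj j.1 k.1 :=
      fun h => htri ⟨hadj, h⟩
    have hHij : H i j = -β i.1 j.1 := by rw [hoff i j hij, if_pos hadj]
    have hrest : ∑ k ∈ (univ.erase i).erase j, f k = 0 := by
      apply Finset.sum_eq_zero
      intro k hk
      have hkj : k ≠ j := (Finset.mem_erase.mp hk).1
      have hki : k ≠ i := (Finset.mem_erase.mp (Finset.mem_erase.mp hk).2).1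
      have h1 := hoff i k hki.symm
      have h2 := hoff k j hkj
      simp only [hf]
      rw [h1, h2]
      split_ifs with ha hb hb
      · exact absurd ⟨k, ha, hb.symm⟩ hnoc
      · simp
      · simp
      · simp
    have hfi : f i < 0 := by
      simp only [hf]
      have := mul_pos (hdiagpos i) (inv_pos.mpr (hd i))
      exact mul_neg_of_pos_of_neg this (by rw [hHij]; linarith [hpos _ _ hadj])
    have hfj : f j < 0 := by
      simp only [hf]
      have hneg : H i j * (d j)⁻¹ < 0 :=
        mul_neg_of_neg_of_pos (by rw [hHij]; linarith [hpos _ _ hadj]) (inv_pos.mpr (hd j))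
      exact mul_neg_of_neg_of_pos hneg (hdiagpos j)
    rw [hentry, hsplit, hrest]
    linarith
  · -- non-adjacent, common neighbor
    rintro ⟨hnadj, k0, hik0, hjk0⟩
    have hHij : H i j = 0 := by rw [hoff i j hij, if_neg hnadj]
    have hnn : ∀ k, 0 ≤ f k := by
      intro k
      by_cases hki : k = i
      · simp [hf, hki, hHij]
      · by_cases hkj : k = j
        · simp [hf, hkj, hHij]
        · simp only [hf]
          rw [hoff i k (fun h => hki h.symm), hoff k j hkj]
          split_ifs with ha hb
          · have heq : -β i.1 k.1 * (d k)⁻¹ * -β k.1 j.1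
                = β i.1 k.1 * (d k)⁻¹ * β k.1 j.1 := by ring
            rw [heq]
            have h1 := hpos _ _ ha
            have h2 := hpos _ _ hb
            have h3 := inv_pos.mpr (hd k)
            positivity
          · simp
          · simp
          · simp
    have hk0i : k0 ≠ i := fun h => by exact G.irrefl (h ▸ hik0)
    have hk0j : k0 ≠ j := fun h => by exact G.irrefl (h ▸ hjk0)
    have hfk0 : 0 < f k0 := by
      simp only [hf]
      rw [hoff i k0 (fun h => hk0i h.symm), hoff k0 j hk0j, if_pos hik0,
        if_pos ((G.adj_symm hjk0))]
      have heq : -β i.1 k0.1 * (d k0)⁻¹ * -β k0.1 j.1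
          = β i.1 k0.1 * (d k0)⁻¹ * β k0.1 j.1 := by ring
      rw [heq]
      have h1 := hpos _ _ hik0
      have h2 := hpos _ _ (G.adj_symm hjk0)
      have h3 := inv_pos.mpr (hd k0)
      positivity
    rw [hentry]
    exact Finset.sum_pos' (fun k _ => hnn k) ⟨k0, Finset.mem_univ k0, hfk0⟩
  · -- non-adjacent, no common neighbor
    rintro ⟨hnadj, hnoc⟩
    have hHij : H i j = 0 := by rw [hoff i j hij, if_neg hnadj]
    rw [hentry]
    apply Finset.sum_eq_zero
    intro k _
    by_cases hki : k = i
    · simp [hf, hki, hHij]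
    · by_cases hkj : k = j
      · simp [hf, hkj, hHij]
      · simp only [hf]
        rw [hoff i k (fun h => hki h.symm), hoff k j hkj]
        split_ifs with ha hb
        · exact absurd ⟨k, ha, hb.symm⟩ hnoc
        · simp
        · simp
        · simp
end

section
/- Let θ = H⁻¹ p where H is the reduced weighted Laplacian of connected graph G with positive edge weights, and p is a random injection vector supported on U_c (the complement of an independent set U of internal nodes, each of degree ≥ 2) with positive definite covariance on U_c. For a node i ∈ U, the vector x* ∈ ℝ^{N−1} with entries x*_j = β_{ij}/H(i,i) for neighbors j of i and 0 otherwise is feasible for the constraints x ≥ 0, 1ᵀx ≤ 1, and achieves E[(θ_i − θ_{−i}ᵀ x)²] = 0. -/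
open Finset Matrix

/-- The (degenerate) voltage covariance `Σθ = J^{U_c} Σ_{p^{U_c}} (J^{U_c})ᵀ`, where
`J = H⁻¹` for the reduced Laplacian `H` and `Σ_{p^{U_c}} = diagonal d` is the injection
covariance supported on the non-zero-injection nodes `U_c`. -/
noncomputable def voltageCovariance {n : ℕ} (G : SimpleGraph (Fin n)) [DecidableRel G.Adj]
    (β : Fin n → Fin n → ℝ) (r : Fin n) (U : Finset {v : Fin n // v ≠ r})
    (d : {v : {v : Fin n // v ≠ r} // v ∉ U} → ℝ) :
    Matrix {v : Fin n // v ≠ r} {v : Fin n // v ≠ r} ℝ :=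
  (Matrix.of fun (a : {v : Fin n // v ≠ r}) (u : {v : {v : Fin n // v ≠ r} // v ∉ U}) =>
      (reducedLaplacian G β r)⁻¹ a u.1) *
    Matrix.diagonal d *
    (Matrix.of fun (u : {v : {v : Fin n // v ≠ r} // v ∉ U}) (a : {v : Fin n // v ≠ r}) =>
      (reducedLaplacian G β r)⁻¹ a u.1)

/-- for a zero-injection node `i ∈ U`, the vector `x*` with entries
`β_{ij}/H(i,i)` for neighbors `j` of `i` and `0` otherwise is feasible for
`x ≥ 0, 1ᵀx ≤ 1` and achieves `E[(θ_i − θ_{−i}ᵀ x)²] = yᵀ Σθ y = 0`, where `y_i = 1`,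
`y_{−i} = −x*`. -/
theorem zero_injection_feasible_zero_cost
    {n : ℕ} (G : SimpleGraph (Fin (n + 1))) [DecidableRel G.Adj]
    (β : Fin (n + 1) → Fin (n + 1) → ℝ)
    (hsym : ∀ i j, β i j = β j i)
    (hpos : ∀ i j, G.Adj i j → 0 < β i j)
    (hconn : G.Connected)
    (r : Fin (n + 1))
    (U : Finset {v : Fin (n + 1) // v ≠ r})
    (hind : ∀ u ∈ U, ∀ w ∈ U, ¬ G.Adj u.1 w.1)
    (hdeg : ∀ u ∈ U, 2 ≤ G.degree u.1)
    (d : {v : {v : Fin (n + 1) // v ≠ r} // v ∉ U} → ℝ) (hd : ∀ u, 0 < d u)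
    (i : {v : Fin (n + 1) // v ≠ r}) (hi : i ∈ U) :
    (∀ j : {v : Fin (n + 1) // v ≠ r},
        0 ≤ if G.Adj i.1 j.1 then β i.1 j.1 / reducedLaplacian G β r i i else 0) ∧
      (∑ j : {v : Fin (n + 1) // v ≠ r},
        if G.Adj i.1 j.1 then β i.1 j.1 / reducedLaplacian G β r i i else 0) ≤ 1 ∧
      ((fun j => if j = i then (1 : ℝ)
          else -(if G.Adj i.1 j.1 then β i.1 j.1 / reducedLaplacian G β r i i else 0)) ⬝ᵥ
        (voltageCovariance G β r U d *ᵥ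
          (fun j => if j = i then (1 : ℝ)
            else -(if G.Adj i.1 j.1 then β i.1 j.1 / reducedLaplacian G β r i i else 0))) = 0) := by
  classical
  set H := reducedLaplacian G β r with hHdef
  have hHii : H i i = ∑ k ∈ univ.filter (G.Adj i.1 ·), β i.1 k := by
    simp [hHdef, reducedLaplacian, weightedLaplacian]
  -- nonemptiness of the neighbor set
  have hne : (univ.filter (G.Adj i.1 ·)).Nonempty := by
    have h2 := hdeg i hi
    have hcard : 0 < (univ.filter (G.Adj i.1 ·)).card := by
      have : G.neighborFinset i.1 = univ.filter (G.Adj i.1 ·) := by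
        ext k; simp [SimpleGraph.mem_neighborFinset]
      rw [← this]
      have := SimpleGraph.card_neighborFinset_eq_degree (G := G) (v := i.1)
      omega
    exact Finset.card_pos.mp hcard
  have hHiipos : 0 < H i i := by
    rw [hHii]
    exact Finset.sum_pos (fun k hk => hpos _ _ (by simpa using (Finset.mem_filter.mp hk).2)) hne
  have hHiine : H i i ≠ 0 := ne_of_gt hHiipos
  -- part 1
  have part1 : ∀ j : {v : Fin (n + 1) // v ≠ r},
      0 ≤ if G.Adj i.1 j.1 then β i.1 j.1 / H i i else 0 := by
    intro j
    split
    · exact div_nonneg (le_of_lt (hpos _ _ (by assumption))) hHiipos.le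
    · exact le_refl 0
  -- part 2
  have part2 : (∑ j : {v : Fin (n + 1) // v ≠ r},
      if G.Adj i.1 j.1 then β i.1 j.1 / H i i else 0) ≤ 1 := by
    have hrw : ∀ j : {v : Fin (n + 1) // v ≠ r},
        (if G.Adj i.1 j.1 then β i.1 j.1 / H i i else 0)
          = (if G.Adj i.1 j.1 then β i.1 j.1 else 0) / H i i := by
      intro j; split <;> simp
    have hsub : (∑ j : {v : Fin (n + 1) // v ≠ r}, if G.Adj i.1 j.1 then β i.1 j.1 else 0)
        = ∑ k ∈ univ.filter (· ≠ r), (if G.Adj i.1 k then β i.1 k else 0) :=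
      (Finset.sum_subtype (p := (· ≠ r)) (univ.filter (· ≠ r)) (fun x => by simp)
        (fun k => if G.Adj i.1 k then β i.1 k else 0)).symm
    have hle : (∑ j : {v : Fin (n + 1) // v ≠ r}, if G.Adj i.1 j.1 then β i.1 j.1 else 0)
        ≤ H i i := by
      have hHii' : H i i = ∑ k, if G.Adj i.1 k then β i.1 k else 0 := by
        rw [hHii, Finset.sum_filter]
      rw [hsub, hHii']
      refine Finset.sum_le_sum_of_subset_of_nonneg (Finset.filter_subset _ _) ?_
      intro k hk _
      split
      · exact (hpos _ _ (by assumption)).le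
      · exact le_refl 0
    calc (∑ j : {v : Fin (n + 1) // v ≠ r}, if G.Adj i.1 j.1 then β i.1 j.1 / H i i else 0)
        = (∑ j : {v : Fin (n + 1) // v ≠ r}, if G.Adj i.1 j.1 then β i.1 j.1 else 0) / H i i := by
          rw [Finset.sum_div]; exact Finset.sum_congr rfl (fun j _ => hrw j)
      _ ≤ 1 := (div_le_one hHiipos).mpr hle
  refine ⟨part1, part2, ?_⟩
  -- part 3
  set y : {v : Fin (n + 1) // v ≠ r} → ℝ := fun j => if j = i then (1 : ℝ)
      else -(if G.Adj i.1 j.1 then β i.1 j.1 / H i i else 0) with hy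
  -- y equals row i of H divided by H i i
  have hyrow : ∀ a, y a = H i a / H i i := by
    intro a
    by_cases ha : a = i
    · subst ha; simp [hy, hHiine]
    · have ha' : i.1 ≠ a.1 := fun h => ha (Subtype.ext h.symm)
      have hHia : H i a = if G.Adj i.1 a.1 then -β i.1 a.1 else 0 := by
        simp [hHdef, reducedLaplacian, weightedLaplacian, ha']
      simp only [hy, if_neg ha, hHia]
      split
      · rw [neg_div]
      · simp
  -- the left factor vanishes
  have hvA : (y ᵥ* (Matrix.of fun (a : {v : Fin (n + 1) // v ≠ r})
      (u : {v : {v : Fin (n + 1) // v ≠ r} // v ∉ U}) => H⁻¹ a u.1)) = 0 := by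
    by_cases hdet : IsUnit H.det
    · funext u
      have hiu : i ≠ u.1 := fun h => u.2 (h ▸ hi)
      have hmul : (H * H⁻¹) i u.1 = 0 := by
        rw [Matrix.mul_nonsing_inv H hdet, Matrix.one_apply_ne hiu]
      calc (y ᵥ* _) u = ∑ a, y a * H⁻¹ a u.1 := by
            simp [Matrix.vecMul, dotProduct]
        _ = ∑ a, (H i a * H⁻¹ a u.1) / H i i := by
            refine Finset.sum_congr rfl (fun a _ => ?_)
            rw [hyrow a]; ring
        _ = (∑ a, H i a * H⁻¹ a u.1) / H i i := by rw [Finset.sum_div]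
        _ = (H * H⁻¹) i u.1 / H i i := by rw [Matrix.mul_apply]
        _ = 0 := by rw [hmul, zero_div]
    · have : H⁻¹ = 0 := Matrix.nonsing_inv_apply_not_isUnit H hdet
      funext u
      simp [Matrix.vecMul, dotProduct, this]
  show y ⬝ᵥ (voltageCovariance G β r U d *ᵥ y) = 0
  unfold voltageCovariance
  rw [← hHdef, ← Matrix.mulVec_mulVec, ← Matrix.mulVec_mulVec, Matrix.dotProduct_mulVec, hvA,
    zero_dotProduct]
end

section
/- In the setting of Theorem 1, for i ∈ U (zero-injection node), any vector y with y_i = 1, y_j = 0 for all j ∈ U−{i}, and yᵀ = cᵀ H^U must equal H(i,:)/H(i,i); i.e., the zero-cost solution of the constrained nodal regression is unique and its nonzero coordinates are exactly the neighbors of i. -/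
open Finset

/-- for a zero-injection node `i ∈ U` (an independent set of internal nodes),
any vector `y` in the row space of `H^U` with `y_i = 1` and `y_j = 0` for all
`j ∈ U − {i}` must equal `H(i,:)/H(i,i)`; its nonzero off-diagonal coordinates are exactly
the neighbors of `i`. -/
theorem zero_cost_solution_unique
    {n : ℕ} (G : SimpleGraph (Fin (n + 1))) [DecidableRel G.Adj]
    (β : Fin (n + 1) → Fin (n + 1) → ℝ)
    (hsym : ∀ i j, β i j = β j i)
    (hpos : ∀ i j, G.Adj i j → 0 < β i j)
    (hconn : G.Connected)
    (r : Fin (n + 1))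
    (U : Finset {v : Fin (n + 1) // v ≠ r})
    (hind : ∀ u ∈ U, ∀ w ∈ U, ¬ G.Adj u.1 w.1)
    (hdeg : ∀ u ∈ U, 2 ≤ G.degree u.1)
    (i : {v : Fin (n + 1) // v ≠ r}) (hi : i ∈ U)
    (y : {v : Fin (n + 1) // v ≠ r} → ℝ)
    (c : {v : {v : Fin (n + 1) // v ≠ r} // v ∈ U} → ℝ)
    (hy : ∀ j, y j = ∑ u : {v : {v : Fin (n + 1) // v ≠ r} // v ∈ U},
      c u * reducedLaplacian G β r u.1 j)
    (hyi : y i = 1)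
    (hyU : ∀ j ∈ U, j ≠ i → y j = 0) :
    (∀ j, y j = reducedLaplacian G β r i j / reducedLaplacian G β r i i) ∧
      ∀ j, j ≠ i → (y j ≠ 0 ↔ G.Adj i.1 j.1) := by
  have hdiag : ∀ u ∈ U, 0 < reducedLaplacian G β r u u := by
    intro u hu
    obtain ⟨k, hk⟩ := (SimpleGraph.degree_pos_iff_exists_adj G u.1).mp
      (lt_of_lt_of_le (by norm_num) (hdeg u hu))
    simp only [reducedLaplacian, Matrix.submatrix_apply, weightedLaplacian, if_pos rfl]
    exact Finset.sum_pos (fun j hj => hpos _ _ (Finset.mem_filter.mp hj).2)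
      ⟨k, Finset.mem_filter.mpr ⟨Finset.mem_univ _, hk⟩⟩
  have hoffU : ∀ u ∈ U, ∀ w ∈ U, u ≠ w → reducedLaplacian G β r u w = 0 := by
    intro u hu w hw huw
    have h1 : u.1 ≠ w.1 := fun h => huw (Subtype.ext h)
    simp [reducedLaplacian, weightedLaplacian, h1, hind u hu w hw]
  have hyw : ∀ w (hw : w ∈ U), y w = c ⟨w, hw⟩ * reducedLaplacian G β r w w := by
    intro w hw
    rw [hy w, Fintype.sum_eq_single ⟨w, hw⟩]
    intro u hu
    have : u.1 ≠ w := fun h => hu (Subtype.ext h)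
    rw [hoffU u.1 u.2 w hw this, mul_zero]
  have hc0 : ∀ u : {v : {v : Fin (n + 1) // v ≠ r} // v ∈ U}, u.1 ≠ i → c u = 0 := by
    intro u hu
    have h0 := hyU u.1 u.2 hu
    rw [hyw u.1 u.2] at h0
    rcases mul_eq_zero.mp h0 with h | h
    · exact h
    · exact absurd h (hdiag u.1 u.2).ne'
  have hci : c ⟨i, hi⟩ * reducedLaplacian G β r i i = 1 := by
    rw [← hyw i hi, hyi]
  have hd := (hdiag i hi).ne'
  have hyj : ∀ j, y j = reducedLaplacian G β r i j / reducedLaplacian G β r i i := by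
    intro j
    rw [hy j, Fintype.sum_eq_single ⟨i, hi⟩
      (fun u hu => by rw [hc0 u (fun h => hu (Subtype.ext h)), zero_mul])]
    rw [eq_div_iff hd, mul_right_comm, hci, one_mul]
  refine ⟨hyj, fun j hj => ?_⟩
  rw [hyj j]
  have h1 : i.1 ≠ j.1 := fun h => hj (Subtype.ext h.symm)
  by_cases hadj : G.Adj i.1 j.1
  · have hH : reducedLaplacian G β r i j = -β i.1 j.1 := by
      simp [reducedLaplacian, weightedLaplacian, h1, hadj]
    rw [hH]
    exact ⟨fun _ => hadj, fun _ =>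
      div_ne_zero (neg_ne_zero.mpr (hpos _ _ hadj).ne') hd⟩
  · simp [reducedLaplacian, weightedLaplacian, h1, hadj]
end

section
/- In a connected graph G where U is an independent set of internal nodes (each of degree ≥ 2) and the minimum loop (cycle) size is 4, with no 4-cycle containing a node of U and every 5-cycle containing at most one node of U: in the Kron-reduced graph Ĝ obtained by eliminating U, no pair of nodes i, j ∈ U_c without a common neighbor in U lies on a 3-cycle of Ĝ. -/
open Finset

/-- Adjacency in the Kron-reduced graph `Ĝ` on `U_c` obtained by eliminating the node set
`U`: `i` and `k` are adjacent iff they are distinct nodes of `U_c` that are adjacent in `G`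
or share a neighbor `h ∈ U`. -/
def kronAdj {n : ℕ} (G : SimpleGraph (Fin n)) (U : Finset (Fin n)) (i k : Fin n) : Prop :=
  i ∉ U ∧ k ∉ U ∧ i ≠ k ∧ (G.Adj i k ∨ ∃ h ∈ U, G.Adj i h ∧ G.Adj k h)

/-- in a connected graph `G` where `U` is an independent set of internal nodes
(degree ≥ 2), with no 3-cycles (minimum loop size 4), no 4-cycle containing a node of `U`,
and every 5-cycle containing at most one node of `U`: in the Kron-reduced graph `Ĝ`, no pair
`i, j ∈ U_c` without a common neighbor in `U` lies on a 3-cycle of `Ĝ`. -/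
theorem kron_reduced_no_triangle
    {n : ℕ} (G : SimpleGraph (Fin n)) [DecidableRel G.Adj]
    (hconn : G.Connected)
    (U : Finset (Fin n))
    (hind : ∀ u ∈ U, ∀ w ∈ U, ¬ G.Adj u w)
    (hdeg : ∀ u ∈ U, 2 ≤ G.degree u)
    (h3 : ∀ a b c : Fin n, G.Adj a b → G.Adj b c → ¬ G.Adj c a)
    (h4 : ∀ a b c d : Fin n, G.Adj a b → G.Adj b c → G.Adj c d → G.Adj d a →
      a ≠ c → b ≠ d → a ∉ U)
    (h5 : ∀ a b c d e : Fin n, G.Adj a b → G.Adj b c → G.Adj c d → G.Adj d e → G.Adj e a →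
      a ≠ c → a ≠ d → b ≠ d → b ≠ e → c ≠ e →
      (({a, b, c, d, e} : Finset (Fin n)).filter (· ∈ U)).card ≤ 1)
    (i j : Fin n) (hi : i ∉ U) (hj : j ∉ U)
    (hnc : ¬ ∃ h ∈ U, G.Adj i h ∧ G.Adj j h) :
    ¬ ∃ k : Fin n, kronAdj G U i j ∧ kronAdj G U j k ∧ kronAdj G U k i := by
  rintro ⟨k, ⟨-, -, hij, hIJ⟩, ⟨-, hk, hjk, hJK⟩, ⟨-, -, hki, hKI⟩⟩
  -- i and j must be directly adjacent
  have hadjij : G.Adj i j := by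
    rcases hIJ with h | h
    · exact h
    · exact absurd h hnc
  rcases hJK with hjk' | ⟨hj', hjU, hjh1, hjh2⟩
  · rcases hKI with hki' | ⟨hi', hiU, hih1, hih2⟩
    · -- triangle in G
      exact h3 i j k hadjij hjk' hki'
    · -- 4-cycle hi', i, j, k
      exact (h4 hi' i j k hih2.symm hadjij hjk' hih1
        (by rintro rfl; exact hj hiU) (Ne.symm hki)) hiU
  · rcases hKI with hki' | ⟨hi', hiU, hih1, hih2⟩
    · -- 4-cycle hj', j, i, k
      exact (h4 hj' j i k hjh1.symm hadjij.symm hki'.symm hjh2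
        (by rintro rfl; exact hi hjU) hjk) hjU
    · -- 5-cycle i, j, hj', k, hi'
      have hne : hj' ≠ hi' := by
        rintro rfl
        exact hnc ⟨hj', hjU, hih2, hjh1⟩
      have hcard := h5 i j hj' k hi' hadjij hjh1 hjh2.symm hih1 hih2.symm
        (by rintro rfl; exact hi hjU) (Ne.symm hki) hjk
        (by rintro rfl; exact hj hiU) hne
      have hsub : ({hj', hi'} : Finset (Fin n)) ⊆
          ({i, j, hj', k, hi'} : Finset (Fin n)).filter (· ∈ U) := by
        intro x hx
        simp only [mem_insert, mem_singleton] at hx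
        simp only [mem_filter, mem_insert, mem_singleton]
        rcases hx with rfl | rfl
        · exact ⟨Or.inr (Or.inr (Or.inl rfl)), hjU⟩
        · exact ⟨Or.inr (Or.inr (Or.inr (Or.inr rfl))), hiU⟩
      have h2 : 2 ≤ (({i, j, hj', k, hi'} : Finset (Fin n)).filter (· ∈ U)).card := by
        calc 2 = ({hj', hi'} : Finset (Fin n)).card := (card_pair hne).symm
        _ ≤ _ := card_le_card hsub
      omega
end
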